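/- arXiv:2106.01101 — 6 statements merged into one kernel-verified Lean document; each statement's English description precedes it below -/
import Mathlib

section
/- Let D be a probability distribution on ℝ^{d+1} supported on {x : ‖x‖ ≤ c} with c ≥ 1, let v ∈ ℝ^{d+1} with ‖v‖ = 1, and let F(w) = (1/2)·E_{x∼D}[(σ(⟨w,x⟩) − σ(⟨v,x⟩))²] where σ(t) = max(t,0). If F(w) ≤ F(0) − δ for some δ > 0, then ‖w‖ ≥ δ/c². -/
open Real MeasureTheory
open scoped RealInnerProductSpace

theorem stmt_2 {d : ℕ} (μ : Measure (EuclideanSpace ℝ (Fin (d + 1))))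
    [IsProbabilityMeasure μ] (c : ℝ) (hc : 1 ≤ c)
    (hsupp : ∀ᵐ x ∂μ, ‖x‖ ≤ c)
    (v : EuclideanSpace ℝ (Fin (d + 1))) (hv : ‖v‖ = 1)
    (F : EuclideanSpace ℝ (Fin (d + 1)) → ℝ)
    (hF : ∀ w, F w = (1 / 2) * ∫ x, (max ⟪w, x⟫ 0 - max ⟪v, x⟫ 0) ^ 2 ∂μ)
    (w : EuclideanSpace ℝ (Fin (d + 1))) (δ : ℝ) (hδ : 0 < δ)
    (hw : F w ≤ F 0 - δ) :
    δ / c ^ 2 ≤ ‖w‖ := by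
  have hcpos : (0:ℝ) < c := lt_of_lt_of_le one_pos hc
  set gw : EuclideanSpace ℝ (Fin (d + 1)) → ℝ := fun x => max ⟪w, x⟫ 0 with hgw
  set gv : EuclideanSpace ℝ (Fin (d + 1)) → ℝ := fun x => max ⟪v, x⟫ 0 with hgv
  have contw : Continuous gw := (continuous_const.inner continuous_id).max continuous_const
  have contv : Continuous gv := (continuous_const.inner continuous_id).max continuous_const
  have bw : ∀ᵐ x ∂μ, 0 ≤ gw x ∧ gw x ≤ ‖w‖ * c := by
    filter_upwards [hsupp] with x hx
    refine ⟨le_max_right _ _, ?_⟩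
    have h1 : ⟪w, x⟫ ≤ ‖w‖ * ‖x‖ := real_inner_le_norm w x
    have h2 : ‖w‖ * ‖x‖ ≤ ‖w‖ * c := mul_le_mul_of_nonneg_left hx (norm_nonneg _)
    have h3 : (0:ℝ) ≤ ‖w‖ * c := mul_nonneg (norm_nonneg _) hcpos.le
    exact max_le (h1.trans h2) h3
  have bv : ∀ᵐ x ∂μ, 0 ≤ gv x ∧ gv x ≤ c := by
    filter_upwards [hsupp] with x hx
    refine ⟨le_max_right _ _, ?_⟩
    have h1 : ⟪v, x⟫ ≤ ‖v‖ * ‖x‖ := real_inner_le_norm v x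
    rw [hv, one_mul] at h1
    exact max_le (h1.trans hx) hcpos.le
  have I1 : Integrable (fun x => gv x ^ 2) μ := by
    refine Integrable.mono' (integrable_const (c ^ 2)) ((contv.pow 2).aestronglyMeasurable) ?_
    filter_upwards [bv] with x ⟨h0, h1⟩
    rw [Real.norm_eq_abs, abs_of_nonneg (sq_nonneg _)]
    exact pow_le_pow_left₀ h0 h1 2
  have I2 : Integrable (fun x => (gw x - gv x) ^ 2) μ := by
    refine Integrable.mono' (integrable_const ((‖w‖ * c + c) ^ 2))
      (((contw.sub contv).pow 2).aestronglyMeasurable) ?_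
    filter_upwards [bw, bv] with x ⟨h0w, h1w⟩ ⟨h0v, h1v⟩
    rw [Real.norm_eq_abs, abs_of_nonneg (sq_nonneg _)]
    have : |gw x - gv x| ≤ ‖w‖ * c + c := by
      rw [abs_sub_le_iff]; constructor <;> nlinarith
    calc (gw x - gv x) ^ 2 = |gw x - gv x| ^ 2 := (sq_abs _).symm
      _ ≤ (‖w‖ * c + c) ^ 2 := pow_le_pow_left₀ (abs_nonneg _) this 2
  have hF0 : F 0 = (1 / 2) * ∫ x, gv x ^ 2 ∂μ := by
    rw [hF 0]
    congr 1
    refine integral_congr_ae (Filter.Eventually.of_forall fun x => ?_)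
    simp [hgv, inner_zero_left]
  have hFw : F w = (1 / 2) * ∫ x, (gw x - gv x) ^ 2 ∂μ := hF w
  have key : ∫ x, (gv x ^ 2 - (gw x - gv x) ^ 2) ∂μ ≤ 2 * ‖w‖ * c ^ 2 := by
    have : ∫ x, (gv x ^ 2 - (gw x - gv x) ^ 2) ∂μ ≤ ∫ _x, (2 * ‖w‖ * c ^ 2) ∂μ := by
      refine integral_mono_ae (I1.sub I2) (integrable_const _) ?_
      filter_upwards [bw, bv] with x ⟨h0w, h1w⟩ ⟨h0v, h1v⟩
      nlinarith [sq_nonneg (gw x)]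
    simpa using this
  have hsplit : ∫ x, (gv x ^ 2 - (gw x - gv x) ^ 2) ∂μ
      = (∫ x, gv x ^ 2 ∂μ) - ∫ x, (gw x - gv x) ^ 2 ∂μ := integral_sub I1 I2
  have hδle : δ ≤ ‖w‖ * c ^ 2 := by
    rw [hF0, hFw] at hw
    nlinarith [key, hsplit]
  rw [div_le_iff₀ (by positivity)]
  exact hδle
end

section
/- Let D be a probability distribution on ℝ^{d+1} supported on {x : ‖x‖ ≤ c} with c ≥ 1, let v ∈ ℝ^{d+1} with ‖v‖ = 1, and let F(w) = (1/2)·E_{x∼D}[(σ(⟨w,x⟩) − σ(⟨v,x⟩))²] where σ = ReLU. If F(w) ≤ F(0) − δ for some δ > 0, then Pr_{x∼D}[⟨w,x⟩ ≥ 0 and ⟨v,x⟩ ≥ 0] ≥ δ/(c²·‖w‖). -/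
open Real MeasureTheory
open scoped RealInnerProductSpace

theorem stmt_3 {d : ℕ} (μ : Measure (EuclideanSpace ℝ (Fin (d + 1))))
    [IsProbabilityMeasure μ] (c : ℝ) (hc : 1 ≤ c)
    (hsupp : ∀ᵐ x ∂μ, ‖x‖ ≤ c)
    (v : EuclideanSpace ℝ (Fin (d + 1))) (hv : ‖v‖ = 1)
    (F : EuclideanSpace ℝ (Fin (d + 1)) → ℝ)
    (hF : ∀ w, F w = (1 / 2) * ∫ x, (max ⟪w, x⟫ 0 - max ⟪v, x⟫ 0) ^ 2 ∂μ)
    (w : EuclideanSpace ℝ (Fin (d + 1))) (δ : ℝ) (hδ : 0 < δ)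
    (hw : F w ≤ F 0 - δ) :
    δ / (c ^ 2 * ‖w‖) ≤ (μ {x | 0 ≤ ⟪w, x⟫ ∧ 0 ≤ ⟪v, x⟫}).toReal := by
  have hc0 : (0:ℝ) < c := lt_of_lt_of_le one_pos hc
  set g : EuclideanSpace ℝ (Fin (d + 1)) → ℝ := fun x => max ⟪v, x⟫ 0 with hgdef
  set h : EuclideanSpace ℝ (Fin (d + 1)) → ℝ := fun x => max ⟪w, x⟫ 0 with hhdef
  have hgc : Continuous g := (continuous_const.inner continuous_id).max continuous_const
  have hhc : Continuous h := (continuous_const.inner continuous_id).max continuous_const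
  have hbg : ∀ᵐ x ∂μ, |g x| ≤ c := hsupp.mono fun x hx => by
    rw [abs_of_nonneg (le_max_right _ _)]
    calc max ⟪v, x⟫ 0 ≤ |⟪v, x⟫| := max_le (le_abs_self _) (abs_nonneg _)
      _ ≤ ‖v‖ * ‖x‖ := abs_real_inner_le_norm _ _
      _ ≤ c := by rw [hv, one_mul]; exact hx
  have hbh : ∀ᵐ x ∂μ, |h x| ≤ ‖w‖ * c := hsupp.mono fun x hx => by
    rw [abs_of_nonneg (le_max_right _ _)]
    calc max ⟪w, x⟫ 0 ≤ |⟪w, x⟫| := max_le (le_abs_self _) (abs_nonneg _)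
      _ ≤ ‖w‖ * ‖x‖ := abs_real_inner_le_norm _ _
      _ ≤ ‖w‖ * c := mul_le_mul_of_nonneg_left hx (norm_nonneg _)
  -- integrability
  have int_g2 : Integrable (fun x => g x ^ 2) μ := by
    refine (integrable_const (c ^ 2)).mono' ((hgc.pow 2).aestronglyMeasurable) ?_
    exact hbg.mono fun x hx => by
      rw [Real.norm_eq_abs, abs_pow]; exact pow_le_pow_left₀ (abs_nonneg _) hx 2
  have int_hg2 : Integrable (fun x => (h x - g x) ^ 2) μ := by
    refine (integrable_const ((‖w‖ * c + c) ^ 2)).mono'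
      (((hhc.sub hgc).pow 2).aestronglyMeasurable) ?_
    filter_upwards [hbg, hbh] with x hg1 hh1
    rw [Real.norm_eq_abs, abs_pow]
    have : |h x - g x| ≤ ‖w‖ * c + c := (abs_sub _ _).trans (add_le_add hh1 hg1)
    exact pow_le_pow_left₀ (abs_nonneg _) this 2
  have int_gh : Integrable (fun x => g x * h x) μ := by
    refine (integrable_const (c * (‖w‖ * c))).mono' ((hgc.mul hhc).aestronglyMeasurable) ?_
    filter_upwards [hbg, hbh] with x hg1 hh1
    rw [Real.norm_eq_abs, abs_mul]
    exact mul_le_mul hg1 hh1 (abs_nonneg _) hc0.le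
  -- F 0 computation
  have hF0 : F 0 = (1 / 2) * ∫ x, g x ^ 2 ∂μ := by
    rw [hF 0]
    congr 1
    refine integral_congr_ae (Filter.Eventually.of_forall fun x => ?_)
    simp only [inner_zero_left, max_self, zero_sub, neg_sq]
    rfl
  -- δ ≤ ∫ g h
  have key : δ ≤ ∫ x, g x * h x ∂μ := by
    have h1 : δ ≤ (1 / 2) * ∫ x, g x ^ 2 ∂μ - (1 / 2) * ∫ x, (h x - g x) ^ 2 ∂μ := by
      have := hw
      rw [hF w, hF0] at this
      linarith
    have h2 : (1 / 2) * ∫ x, g x ^ 2 ∂μ - (1 / 2) * ∫ x, (h x - g x) ^ 2 ∂μ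
        = (1 / 2) * ∫ x, (g x ^ 2 - (h x - g x) ^ 2) ∂μ := by
      rw [integral_sub int_g2 int_hg2]; ring
    have h3 : ∫ x, (g x ^ 2 - (h x - g x) ^ 2) ∂μ ≤ ∫ x, 2 * (g x * h x) ∂μ := by
      refine integral_mono (int_g2.sub int_hg2) (int_gh.const_mul 2)
        (fun x => ?_)
      nlinarith [sq_nonneg (h x)]
    rw [integral_const_mul] at h3
    linarith
  -- set S
  set S : Set (EuclideanSpace ℝ (Fin (d + 1))) := {x | 0 ≤ ⟪w, x⟫ ∧ 0 ≤ ⟪v, x⟫} with hS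
  have hSmeas : MeasurableSet S := by
    have h1 : Continuous fun x : EuclideanSpace ℝ (Fin (d + 1)) => ⟪w, x⟫ :=
      continuous_const.inner continuous_id
    have h2 : Continuous fun x : EuclideanSpace ℝ (Fin (d + 1)) => ⟪v, x⟫ :=
      continuous_const.inner continuous_id
    exact ((measurableSet_le measurable_const h1.measurable).inter
      (measurableSet_le measurable_const h2.measurable))
  -- ∫ g h ≤ c^2 ‖w‖ μ S
  have key2 : ∫ x, g x * h x ∂μ ≤ (μ S).toReal * (c ^ 2 * ‖w‖) := by
    have hind : ∫ x, S.indicator (fun _ => c ^ 2 * ‖w‖) x ∂μ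
        = (μ S).toReal * (c ^ 2 * ‖w‖) := by
      rw [integral_indicator_const _ hSmeas]; simp [smul_eq_mul]; exact Or.inl rfl
    rw [← hind]
    refine integral_mono_ae int_gh ((integrable_const _).indicator hSmeas) ?_
    filter_upwards [hsupp] with x hx
    by_cases hxS : x ∈ S
    · rw [Set.indicator_of_mem hxS]
      have hg1 : g x ≤ c := by
        calc g x ≤ |⟪v, x⟫| := max_le (le_abs_self _) (abs_nonneg _)
          _ ≤ ‖v‖ * ‖x‖ := abs_real_inner_le_norm _ _
          _ ≤ c := by rw [hv, one_mul]; exact hx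
      have hh1 : h x ≤ ‖w‖ * c := by
        calc h x ≤ |⟪w, x⟫| := max_le (le_abs_self _) (abs_nonneg _)
          _ ≤ ‖w‖ * ‖x‖ := abs_real_inner_le_norm _ _
          _ ≤ ‖w‖ * c := mul_le_mul_of_nonneg_left hx (norm_nonneg _)
      calc g x * h x ≤ c * (‖w‖ * c) :=
            mul_le_mul hg1 hh1 (le_max_right _ _) hc0.le
        _ = c ^ 2 * ‖w‖ := by ring
    · rw [Set.indicator_of_notMem hxS]
      rcases not_and_or.mp hxS with hw' | hv'
      · rw [show h x = 0 from max_eq_right (le_of_not_ge hw'), mul_zero]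
      · rw [show g x = 0 from max_eq_right (le_of_not_ge hv'), zero_mul]
  have hfin : δ ≤ (μ S).toReal * (c ^ 2 * ‖w‖) := key.trans key2
  have hw0 : w ≠ 0 := by
    rintro rfl
    simp only [norm_zero, mul_zero] at hfin
    linarith
  have hwpos : 0 < ‖w‖ := norm_pos_iff.mpr hw0
  rw [div_le_iff₀ (by positivity)]
  linarith
end

section
/- Let D be a probability distribution on ℝ^{d+1} supported on {x : ‖x‖ ≤ c}, let v ∈ ℝ^{d+1}, σ = ReLU, and ∇F(w) = E_{x∼D}[(σ(⟨w,x⟩) − σ(⟨v,x⟩))·𝟙(⟨w,x⟩ ≥ 0)·x]. Then for every w, ⟨∇F(w), w − v⟩ ≥ E_{x∼D}[𝟙(⟨w,x⟩ ≥ 0, ⟨v,x⟩ ≥ 0)·(⟨w−v, x⟩)²] ≥ 0. -/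
open Real MeasureTheory
open scoped RealInnerProductSpace

theorem stmt_6 {d : ℕ} (μ : Measure (EuclideanSpace ℝ (Fin (d + 1))))
    [IsProbabilityMeasure μ] (c : ℝ) (hsupp : ∀ᵐ x ∂μ, ‖x‖ ≤ c)
    (v : EuclideanSpace ℝ (Fin (d + 1)))
    (gradF : EuclideanSpace ℝ (Fin (d + 1)) → EuclideanSpace ℝ (Fin (d + 1)))
    (hgradF : ∀ w, gradF w =
      ∫ x, (if 0 ≤ ⟪w, x⟫ then max ⟪w, x⟫ 0 - max ⟪v, x⟫ 0 else 0) • x ∂μ)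
    (w : EuclideanSpace ℝ (Fin (d + 1))) :
    (∫ x, (if 0 ≤ ⟪w, x⟫ ∧ 0 ≤ ⟪v, x⟫ then (⟪w - v, x⟫) ^ 2 else 0) ∂μ)
        ≤ ⟪gradF w, w - v⟫ ∧
    0 ≤ ∫ x, (if 0 ≤ ⟪w, x⟫ ∧ 0 ≤ ⟪v, x⟫ then (⟪w - v, x⟫) ^ 2 else 0) ∂μ := by
  set F : EuclideanSpace ℝ (Fin (d + 1)) → ℝ :=
    fun x => if 0 ≤ ⟪w, x⟫ then max ⟪w, x⟫ 0 - max ⟪v, x⟫ 0 else 0 with hF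
  set G : EuclideanSpace ℝ (Fin (d + 1)) → ℝ :=
    fun x => if 0 ≤ ⟪w, x⟫ ∧ 0 ≤ ⟪v, x⟫ then (⟪w - v, x⟫) ^ 2 else 0 with hG
  have hwc : Continuous fun x : EuclideanSpace ℝ (Fin (d + 1)) => ⟪w, x⟫ :=
    continuous_const.inner continuous_id
  have hvc : Continuous fun x : EuclideanSpace ℝ (Fin (d + 1)) => ⟪v, x⟫ :=
    continuous_const.inner continuous_id
  have hwvc : Continuous fun x : EuclideanSpace ℝ (Fin (d + 1)) => ⟪w - v, x⟫ :=
    continuous_const.inner continuous_id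
  have hsetw : MeasurableSet {x : EuclideanSpace ℝ (Fin (d + 1)) | 0 ≤ ⟪w, x⟫} :=
    measurableSet_le measurable_const hwc.measurable
  have hsetv : MeasurableSet {x : EuclideanSpace ℝ (Fin (d + 1)) | 0 ≤ ⟪v, x⟫} :=
    measurableSet_le measurable_const hvc.measurable
  have hFm : Measurable F := by
    apply Measurable.ite hsetw
    · exact (hwc.max continuous_const).measurable.sub (hvc.max continuous_const).measurable
    · exact measurable_const
  have hGm : Measurable G := by
    apply Measurable.ite (hsetw.inter hsetv)
    · exact (hwvc.measurable.pow_const 2)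
    · exact measurable_const
  -- bound for F
  have hFb : ∀ x, |F x| ≤ (‖w‖ + ‖v‖) * ‖x‖ := by
    intro x
    rw [hF]
    by_cases h : 0 ≤ ⟪w, x⟫
    · simp only [if_pos h]
      calc |max ⟪w, x⟫ 0 - max ⟪v, x⟫ 0| ≤ |⟪w, x⟫ - ⟪v, x⟫| :=
            abs_max_sub_max_le_abs _ _ _
        _ ≤ |⟪w, x⟫| + |⟪v, x⟫| := abs_sub _ _
        _ ≤ ‖w‖ * ‖x‖ + ‖v‖ * ‖x‖ :=
            add_le_add (abs_real_inner_le_norm _ _) (abs_real_inner_le_norm _ _)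
        _ = (‖w‖ + ‖v‖) * ‖x‖ := by ring
    · simp only [if_neg h, abs_zero]
      positivity
  have hc0 : 0 ≤ c := by
    obtain ⟨x, hx⟩ := hsupp.exists
    exact (norm_nonneg x).trans hx
  -- integrability of the gradient integrand
  have hfm : AEStronglyMeasurable (fun x => F x • x) μ :=
    (hFm.smul measurable_id).aestronglyMeasurable
  have hf_int : Integrable (fun x => F x • x) μ := by
    apply Integrable.mono' (integrable_const ((‖w‖ + ‖v‖) * c * c)) hfm
    filter_upwards [hsupp] with x hx
    rw [norm_smul]
    calc ‖F x‖ * ‖x‖ ≤ ((‖w‖ + ‖v‖) * ‖x‖) * ‖x‖ := by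
          apply mul_le_mul_of_nonneg_right _ (norm_nonneg x)
          simpa using hFb x
      _ ≤ (‖w‖ + ‖v‖) * c * c := by
          apply mul_le_mul (mul_le_mul_of_nonneg_left hx (by positivity)) hx (norm_nonneg x)
          positivity
  have hG_int : Integrable G μ := by
    apply Integrable.mono' (integrable_const ((‖w - v‖ * c) ^ 2)) hGm.aestronglyMeasurable
    filter_upwards [hsupp] with x hx
    simp only [hG]
    by_cases h : 0 ≤ ⟪w, x⟫ ∧ 0 ≤ ⟪v, x⟫
    · rw [if_pos h]
      have h1 : |⟪w - v, x⟫| ≤ ‖w - v‖ * c :=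
        (abs_real_inner_le_norm _ _).trans (mul_le_mul_of_nonneg_left hx (norm_nonneg _))
      calc ‖⟪w - v, x⟫ ^ 2‖ = |⟪w - v, x⟫| ^ 2 := by rw [Real.norm_eq_abs, abs_pow]
        _ ≤ (‖w - v‖ * c) ^ 2 := pow_le_pow_left₀ (abs_nonneg _) h1 2
    · rw [if_neg h, norm_zero]
      positivity
  -- the inner-product identity
  have hinner : ⟪gradF w, w - v⟫ = ∫ x, F x * ⟪w - v, x⟫ ∂μ := by
    rw [hgradF w, real_inner_comm, ← integral_inner hf_int]
    congr 1
    funext x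
    rw [real_inner_smul_right]
  have hptwise : ∀ x, G x ≤ F x * ⟪w - v, x⟫ := by
    intro x
    have hab : ⟪w - v, x⟫ = ⟪w, x⟫ - ⟪v, x⟫ := inner_sub_left _ _ _
    simp only [hF, hG]
    rw [hab]
    by_cases hw' : 0 ≤ ⟪w, x⟫
    · by_cases hv' : 0 ≤ ⟪v, x⟫
      · rw [if_pos ⟨hw', hv'⟩, if_pos hw', max_eq_left hw', max_eq_left hv', sq]
      · rw [if_neg (by tauto), if_pos hw', max_eq_left hw',
          max_eq_right (le_of_lt (not_le.mp hv'))]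
        have : 0 ≤ ⟪w, x⟫ - ⟪v, x⟫ := by
          have := not_le.mp hv'
          linarith
        nlinarith [not_le.mp hv']
    · rw [if_neg (by tauto), if_neg hw', zero_mul]
  have hfi_int : Integrable (fun x => F x * ⟪w - v, x⟫) μ := by
    have := Integrable.const_inner (𝕜 := ℝ) (w - v) hf_int
    simpa only [real_inner_smul_right] using this
  constructor
  · rw [hinner]
    exact integral_mono hG_int hfi_int hptwise
  · apply integral_nonneg
    intro x
    simp only [hG, Pi.zero_apply]
    split
    · exact sq_nonneg _
    · exact le_refl 0
end

section
/- Let D be a distribution on ℝ^{d+1} whose last coordinate is constantly 1 and whose first d coordinates have distribution D̃ supported on {x̃ : ‖x̃‖ ≤ c}. Let v = (ṽ, b_v) ∈ ℝ^{d+1}, σ = ReLU, and ∇F(w) = E_{x∼D}[(σ(⟨w,x⟩) − σ(⟨v,x⟩))·𝟙(⟨w,x⟩ > 0)·x]. If w = (w̃, b_w) with w̃ ≠ 0 and −b_w/‖w̃‖ ≥ c, then ∇F(w) = 0. -/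
open Real MeasureTheory
open scoped RealInnerProductSpace

/-- Learning a single neuron with bias: if `w̃ ≠ 0` and `-b_w/‖w̃‖ ≥ c`, where the input
distribution (over the first `d` coordinates, the last coordinate being the constant `1`)
is supported on the ball of radius `c`, then the gradient of the loss vanishes.
The gradient `∇F(w) ∈ ℝ^{d+1}` is expressed via its first `d` coordinates and its last
(bias) coordinate. -/
theorem stmt_7 {d : ℕ} (ν : Measure (EuclideanSpace ℝ (Fin d)))
    [IsProbabilityMeasure ν] (c : ℝ) (hsupp : ∀ᵐ xt ∂ν, ‖xt‖ ≤ c)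
    (vt : EuclideanSpace ℝ (Fin d)) (bv : ℝ)
    (wt : EuclideanSpace ℝ (Fin d)) (bw : ℝ)
    (hwt : wt ≠ 0) (hbw : c ≤ -bw / ‖wt‖) :
    (∫ xt, (if 0 < ⟪wt, xt⟫ + bw then
        max (⟪wt, xt⟫ + bw) 0 - max (⟪vt, xt⟫ + bv) 0 else 0) • xt ∂ν) = 0 ∧
    (∫ xt, (if 0 < ⟪wt, xt⟫ + bw then
        max (⟪wt, xt⟫ + bw) 0 - max (⟪vt, xt⟫ + bv) 0 else 0) ∂ν) = 0 := by
  have hw : 0 < ‖wt‖ := norm_pos_iff.mpr hwt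
  have key : ∀ᵐ xt ∂ν, ¬ (0 < ⟪wt, xt⟫ + bw) := by
    filter_upwards [hsupp] with xt hxt
    have h1 : ⟪wt, xt⟫ ≤ ‖wt‖ * ‖xt‖ := real_inner_le_norm wt xt
    have h2 : ‖wt‖ * ‖xt‖ ≤ ‖wt‖ * c := by
      exact mul_le_mul_of_nonneg_left hxt hw.le
    have h3 : ‖wt‖ * c ≤ -bw := by
      have := mul_le_mul_of_nonneg_left hbw hw.le
      rwa [mul_div_cancel₀ _ hw.ne'] at this
    linarith
  constructor
  · rw [integral_eq_zero_of_ae]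
    filter_upwards [key] with xt h
    rw [if_neg h]; simp
  · rw [integral_eq_zero_of_ae]
    filter_upwards [key] with xt h
    rw [if_neg h]; simp
end

section
/- Let D be a distribution on ℝ^{d+1} whose last coordinate is constantly 1 and whose first d coordinates have distribution D̃ supported on {x̃ : ‖x̃‖ ≤ c}. Let σ = ReLU and F(w) = (1/2)·E_{x∼D}[(σ(⟨w,x⟩) − σ(⟨v,x⟩))²]. If w = (w̃, b_w) with w̃ = 0 and b_w < 0, then ∇F(w) = 0 and F(w) = F(0). -/
open Real MeasureTheory
open scoped RealInnerProductSpace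

/-- If `w̃ = 0` and `b_w < 0`, then the gradient (given here via its first `d` coordinates
and its bias coordinate) vanishes, and `F(w) = F(0)`.  The loss `F` is given as a function
of the pair `(w̃, b_w)`; the input distribution has last coordinate constantly `1` and its
first `d` coordinates distributed as `ν`, supported on the ball of radius `c`. -/
theorem stmt_8 {d : ℕ} (ν : Measure (EuclideanSpace ℝ (Fin d)))
    [IsProbabilityMeasure ν] (c : ℝ) (hsupp : ∀ᵐ xt ∂ν, ‖xt‖ ≤ c)
    (vt : EuclideanSpace ℝ (Fin d)) (bv : ℝ)
    (F : EuclideanSpace ℝ (Fin d) × ℝ → ℝ)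
    (hF : ∀ p, F p = (1 / 2) *
      ∫ xt, (max (⟪p.1, xt⟫ + p.2) 0 - max (⟪vt, xt⟫ + bv) 0) ^ 2 ∂ν)
    (bw : ℝ) (hbw : bw < 0) :
    (∫ xt, (if 0 < ⟪(0 : EuclideanSpace ℝ (Fin d)), xt⟫ + bw then
        max (⟪(0 : EuclideanSpace ℝ (Fin d)), xt⟫ + bw) 0 - max (⟪vt, xt⟫ + bv) 0
      else 0) • xt ∂ν) = 0 ∧
    (∫ xt, (if 0 < ⟪(0 : EuclideanSpace ℝ (Fin d)), xt⟫ + bw then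
        max (⟪(0 : EuclideanSpace ℝ (Fin d)), xt⟫ + bw) 0 - max (⟪vt, xt⟫ + bv) 0
      else 0) ∂ν) = 0 ∧
    F (0, bw) = F (0, 0) := by
  have h0 : ∀ xt : EuclideanSpace ℝ (Fin d), ⟪(0 : EuclideanSpace ℝ (Fin d)), xt⟫ = (0:ℝ) :=
    fun xt => inner_zero_left xt
  refine ⟨?_, ?_, ?_⟩
  · simp [h0, hbw.not_gt]
  · simp [h0, hbw.not_gt]
  · simp [hF, h0, max_eq_right hbw.le]
end

section
/- Let D̃ be the uniform distribution on the ball B = {x̃ ∈ ℝ^d : ‖x̃‖ ≤ r}, and let v ∈ ℝ^{d+1} with ṽ = (1,0,…,0) and b_v = −(r − r/(2d²)). Let w ∈ ℝ^{d+1} with b_w = 0, w̃₁ < −4/√d, and ‖w̃_{2:d}‖ ≤ 2√d. Then Pr_{x̃∼D̃}[⟨w̃, x̃⟩ + b_w ≥ 0 and ⟨ṽ, x̃⟩ + b_v ≥ 0] = 0. -/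
open Real MeasureTheory
open scoped RealInnerProductSpace

set_option maxHeartbeats 1000000 in
/-- `ν` is the uniform distribution on the ball of radius `r` in `ℝ^d`; the target is
`v = (ṽ, b_v)` with `ṽ = e₁` and `b_v = -(r - r/(2d²))`; `w = (w̃, b_w)` has `b_w = 0`,
first coordinate `w̃₁ < -4/√d`, and `‖w̃_{2:d}‖ ≤ 2√d`.  Then the probability that both
neurons are active is zero. -/
theorem stmt_9 {d : ℕ} (hd : 0 < d) (r : ℝ) (hr : 0 < r)
    (ν : Measure (EuclideanSpace ℝ (Fin d)))
    (hν : ν = (volume (Metric.closedBall (0 : EuclideanSpace ℝ (Fin d)) r))⁻¹ •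
      (volume.restrict (Metric.closedBall (0 : EuclideanSpace ℝ (Fin d)) r)))
    (vt : EuclideanSpace ℝ (Fin d)) (hvt : vt = EuclideanSpace.single (⟨0, hd⟩ : Fin d) 1)
    (bv : ℝ) (hbv : bv = -(r - r / (2 * (d : ℝ) ^ 2)))
    (wt : EuclideanSpace ℝ (Fin d)) (bw : ℝ) (hbw : bw = 0)
    (hw1 : wt ⟨0, hd⟩ < -4 / Real.sqrt d)
    (hw2 : Real.sqrt (∑ i ∈ Finset.univ.erase (⟨0, hd⟩ : Fin d), (wt i) ^ 2)
      ≤ 2 * Real.sqrt d) :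
    ν {xt | 0 ≤ ⟪wt, xt⟫ + bw ∧ 0 ≤ ⟪vt, xt⟫ + bv} = 0 := by
  subst hν hvt hbv hbw
  rw [Measure.smul_apply, Measure.restrict_apply' measurableSet_closedBall]
  have hempty : {xt : EuclideanSpace ℝ (Fin d) | 0 ≤ ⟪wt, xt⟫ + 0 ∧
      0 ≤ ⟪EuclideanSpace.single (⟨0, hd⟩ : Fin d) (1:ℝ), xt⟫ + -(r - r / (2 * (d : ℝ) ^ 2))} ∩
      Metric.closedBall 0 r = ∅ := by
    rw [Set.eq_empty_iff_forall_notMem]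
    rintro x ⟨⟨hw, hv⟩, hx⟩
    rw [Metric.mem_closedBall, dist_zero_right] at hx
    set i0 : Fin d := ⟨0, hd⟩
    set a : ℝ := x i0 with ha
    have hd1 : (1:ℝ) ≤ (d:ℝ) := by exact_mod_cast hd
    have hsd : (0:ℝ) < Real.sqrt d := Real.sqrt_pos.mpr (by positivity)
    have hsd2 : Real.sqrt d * Real.sqrt d = (d:ℝ) := Real.mul_self_sqrt (by positivity)
    -- hv gives a lower bound on a
    have hva : r - r / (2 * (d : ℝ) ^ 2) ≤ a := by
      have : ⟪EuclideanSpace.single i0 (1:ℝ), x⟫ = a := by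
        simp [EuclideanSpace.inner_single_left, ha]
      linarith [hv, this.symm ▸ hv]
    have hdd : r / (2 * (d : ℝ) ^ 2) ≤ r / 2 := by
      apply div_le_div_of_nonneg_left hr.le (by norm_num) (by nlinarith)
    have har : r / 2 ≤ a := by linarith
    have hapos : 0 < a := by linarith
    -- sum of squares bound
    have hsum : ∑ i, (x i) ^ 2 ≤ r ^ 2 := by
      have hnorm : ‖x‖ ^ 2 = ∑ i, (x i) ^ 2 := by
        rw [EuclideanSpace.norm_eq]
        rw [Real.sq_sqrt (Finset.sum_nonneg fun i _ => sq_nonneg _)]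
        simp [Real.norm_eq_abs, sq_abs]
      calc ∑ i, (x i) ^ 2 = ‖x‖ ^ 2 := hnorm.symm
        _ ≤ r ^ 2 := by nlinarith [norm_nonneg x]
    have hsplit : a ^ 2 + ∑ i ∈ Finset.univ.erase i0, (x i) ^ 2 = ∑ i, (x i) ^ 2 := by
      exact Finset.add_sum_erase Finset.univ (fun i => x i ^ 2) (Finset.mem_univ i0)
    have hrest : ∑ i ∈ Finset.univ.erase i0, (x i) ^ 2 ≤ r ^ 2 - a ^ 2 := by linarith
    have hrestnn : (0:ℝ) ≤ ∑ i ∈ Finset.univ.erase i0, (x i) ^ 2 :=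
      Finset.sum_nonneg fun i _ => sq_nonneg _
    -- a ≤ r
    have harr : a ≤ r := by nlinarith
    -- r² - a² ≤ (r/d)²
    have hkey : r ^ 2 - a ^ 2 ≤ (r / d) ^ 2 := by
      have h1 : r * (1 - 1 / (2 * (d:ℝ) ^ 2)) ≤ a := by
        have : r - r / (2 * (d : ℝ) ^ 2) = r * (1 - 1 / (2 * (d:ℝ) ^ 2)) := by ring
        linarith [this ▸ hva]
      have hdpos : (0:ℝ) < (d:ℝ) := by positivity
      have h2 : 0 ≤ r * (1 - 1 / (2 * (d:ℝ) ^ 2)) := by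
        apply mul_nonneg hr.le
        have : 1 / (2 * (d:ℝ) ^ 2) ≤ 1 / 2 := by
          apply div_le_div_of_nonneg_left (by norm_num) (by norm_num) (by nlinarith)
        linarith
      have h3 : (r * (1 - 1 / (2 * (d:ℝ) ^ 2))) ^ 2 ≤ a ^ 2 := by nlinarith
      have hexp : (r * (1 - 1 / (2 * (d:ℝ) ^ 2))) ^ 2
          = r ^ 2 - r ^ 2 / (d:ℝ) ^ 2 + r ^ 2 / (4 * (d:ℝ) ^ 4) := by
        field_simp
        ring
      have hnn : 0 ≤ r ^ 2 / (4 * (d:ℝ) ^ 4) := by positivity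
      rw [div_pow]
      linarith [hexp ▸ h3]
    -- bound sqrt of rest
    have hrest2 : Real.sqrt (∑ i ∈ Finset.univ.erase i0, (x i) ^ 2) ≤ r / d := by
      have : Real.sqrt (∑ i ∈ Finset.univ.erase i0, (x i) ^ 2) ≤ Real.sqrt ((r/d)^2) :=
        Real.sqrt_le_sqrt (by linarith)
      rwa [Real.sqrt_sq (by positivity)] at this
    -- Cauchy-Schwarz on the rest
    have hCS : ∑ i ∈ Finset.univ.erase i0, wt i * x i ≤ (2 * Real.sqrt d) * (r / d) := by
      calc ∑ i ∈ Finset.univ.erase i0, wt i * x i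
          ≤ Real.sqrt (∑ i ∈ Finset.univ.erase i0, (wt i) ^ 2) *
            Real.sqrt (∑ i ∈ Finset.univ.erase i0, (x i) ^ 2) :=
            Real.sum_mul_le_sqrt_mul_sqrt _ _ _
        _ ≤ (2 * Real.sqrt d) * (r / d) := by
            apply mul_le_mul hw2 hrest2 (Real.sqrt_nonneg _)
            positivity
    -- expand inner product
    have hinner : ⟪wt, x⟫ = wt i0 * a + ∑ i ∈ Finset.univ.erase i0, wt i * x i := by
      rw [PiLp.inner_apply]
      simp only [RCLike.inner_apply, conj_trivial]
      rw [Finset.sum_congr rfl fun i _ => mul_comm (x i) (wt i)]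
      exact (Finset.add_sum_erase _ (fun i => wt i * x i) (Finset.mem_univ i0)).symm
    -- first term bound
    have hfirst : wt i0 * a < -4 / Real.sqrt d * a :=
      mul_lt_mul_of_pos_right hw1 hapos
    have hc : -4 / Real.sqrt d ≤ 0 :=
      div_nonpos_of_nonpos_of_nonneg (by norm_num) hsd.le
    have hfirst2 : -4 / Real.sqrt d * a ≤ -4 / Real.sqrt d * (r / 2) := by
      nlinarith [mul_nonneg (neg_nonneg.mpr hc) (sub_nonneg.mpr har)]
    have heq1 : -4 / Real.sqrt d * (r / 2) = -(2 * r / Real.sqrt d) := by ring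
    have heq2 : (2 * Real.sqrt d) * (r / d) = 2 * r / Real.sqrt d := by
      field_simp
      nlinarith [hsd2]
    have : ⟪wt, x⟫ < 0 := by
      rw [hinner]
      calc wt i0 * a + ∑ i ∈ Finset.univ.erase i0, wt i * x i
          < -4 / Real.sqrt d * a + (2 * Real.sqrt d) * (r / d) := by
            exact add_lt_add_of_lt_of_le hfirst hCS
        _ ≤ -(2 * r / Real.sqrt d) + 2 * r / Real.sqrt d := by
            rw [heq2, ← heq1]; linarith
        _ = 0 := by ring
    linarith [hw]
  rw [hempty, measure_empty, smul_zero]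
end
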